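/- Let X, Z be LR-fillings of the same type (α, β, γ). If Z <_dom X in the dominance order, then ω(Z) < ω(X) in the lexicographic order, where ω(T) is the word of entries of T obtained by reading columns from bottom to top, leftmost column first. -/

import Mathlib

open Equiv

/-! ### Permutations: adjacent transpositions, Coxeter length, Bruhat order -/

/-- `s` is an adjacent transposition `(i, i+1)` in `S_n` (values `0`-indexed). -/
def IsAdjTrans {n : ℕ} (s : Perm (Fin n)) : Prop :=
  ∃ (i : ℕ) (h : i + 1 < n), s = Equiv.swap ⟨i, Nat.lt_of_succ_lt h⟩ ⟨i + 1, h⟩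

/-- Coxeter length: the minimal number of adjacent transpositions in a factorization. -/
noncomputable def permLength {n : ℕ} (x : Perm (Fin n)) : ℕ :=
  sInf {k | ∃ l : List (Perm (Fin n)), l.length = k ∧ (∀ s ∈ l, IsAdjTrans s) ∧ l.prod = x}

/-- Strict Bruhat order: generated by `u < t * u` for transpositions `t`
increasing the length. -/
def BruhatLT {n : ℕ} (x z : Perm (Fin n)) : Prop :=
  Relation.TransGen
    (fun u v => ∃ t : Perm (Fin n), t.IsSwap ∧ v = t * u ∧ permLength u < permLength v) x z

/-- Bruhat order (reflexive version). -/
def BruhatLE {n : ℕ} (x z : Perm (Fin n)) : Prop := x = z ∨ BruhatLT x z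

/-! ### Partitions -/

/-- A partition: an antitone, finitely supported function `ℕ → ℕ`
(the part `αᵢ` of the paper is `f (i-1)`; rows are `0`-indexed). -/
structure Partn where
  f : ℕ → ℕ
  antitone' : Antitone f
  finite_supp : ∃ N, ∀ i, N ≤ i → f i = 0

/-- `p` is a partition of `n`. -/
def PartnOf (p : Partn) (n : ℕ) : Prop :=
  ∃ N, (∀ i, N ≤ i → p.f i = 0) ∧ ∑ i ∈ Finset.range N, p.f i = n

/-- The partial sum `α₁ + ⋯ + α_j` of the first `j` parts. -/
def psum (p : Partn) (j : ℕ) : ℕ := ∑ i ∈ Finset.range j, p.f i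

/-- The set of block boundaries `α₁, α₁+α₂, …` (`1`-indexed positions). -/
def Bdry (p : Partn) : Set ℕ := {m | ∃ j, 1 ≤ j ∧ m = psum p j}

/-- `S^α`: permutations whose values within each block of `α` occur in increasing
order of position.  Values are `0`-indexed: value `v` is the paper's value `v+1`,
and `v`, `v+1` lie in the same block iff `v+1 ∉ Bdry α`. -/
def SAset (α : Partn) {n : ℕ} (x : Perm (Fin n)) : Prop :=
  ∀ (v : ℕ) (h : v + 1 < n), (v + 1) ∉ Bdry α →
    x⁻¹ ⟨v, Nat.lt_of_succ_lt h⟩ < x⁻¹ ⟨v + 1, h⟩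

/-- Containment of partitions. -/
def PartnSub (γ β : Partn) : Prop := ∀ i, γ.f i ≤ β.f i

/-- The transpose (conjugate) partition: `β'_j = #{i : βᵢ ≥ j}` (columns `0`-indexed). -/
noncomputable def ptranspose (p : Partn) (j : ℕ) : ℕ := Set.ncard {i | j < p.f i}

/-- `β∖γ` is a vertical strip: `βᵢ ≤ γᵢ + 1` for all `i`. -/
def VertStrip (β γ : Partn) : Prop := ∀ i, β.f i ≤ γ.f i + 1

/-- `β∖γ` is a horizontal strip: `β'∖γ'` is a vertical strip. -/
def HorizStrip (β γ : Partn) : Prop := ∀ j, ptranspose β j ≤ ptranspose γ j + 1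

/-- A rook strip is a horizontal and vertical strip. -/
def RookStrip (β γ : Partn) : Prop := VertStrip β γ ∧ HorizStrip β γ

/-- The boxes of the skew diagram `β∖γ` (row, column), `0`-indexed. -/
def SkewCells (β γ : Partn) : Set (ℕ × ℕ) := {c | γ.f c.1 ≤ c.2 ∧ c.2 < β.f c.1}

/-! ### Fillings of skew diagrams -/

/-- A filling of the skew diagram `β∖γ` with content `α`: each box gets an entry
`≥ 1`, and there are `α_u` entries equal to `u` (the paper's `αᵤ` is `α.f (u-1)`). -/
structure SkFilling (α β γ : Partn) where
  entry : ℕ × ℕ → ℕ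
  zero_outside : ∀ c, c ∉ SkewCells β γ → entry c = 0
  pos_inside : ∀ c ∈ SkewCells β γ, 1 ≤ entry c
  content : ∀ u : ℕ, 1 ≤ u → Set.ncard {c ∈ SkewCells β γ | entry c = u} = α.f (u - 1)

/-- The Littlewood–Richardson conditions: rows weakly increase, columns strictly
increase, and the lattice permutation property holds. -/
def IsLRF {α β γ : Partn} (F : SkFilling α β γ) : Prop :=
  (∀ i j j' : ℕ, (i, j) ∈ SkewCells β γ → (i, j') ∈ SkewCells β γ → j ≤ j' →
      F.entry (i, j) ≤ F.entry (i, j')) ∧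
  (∀ i i' j : ℕ, (i, j) ∈ SkewCells β γ → (i', j) ∈ SkewCells β γ → i < i' →
      F.entry (i, j) < F.entry (i', j)) ∧
  (∀ u c : ℕ, 2 ≤ u →
      Set.ncard {p ∈ SkewCells β γ | c ≤ p.2 ∧ F.entry p = u} ≤
      Set.ncard {p ∈ SkewCells β γ | c ≤ p.2 ∧ F.entry p = u - 1})

/-- Row `i` of the partition `γ⁽ᵘ⁾`: the boxes of `γ` together with the boxes of
`β∖γ` whose entry is at most `u`. -/
noncomputable def regionRow {α β γ : Partn} (F : SkFilling α β γ) (u i : ℕ) : ℕ :=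
  γ.f i + Set.ncard {j | (i, j) ∈ SkewCells β γ ∧ F.entry (i, j) ≤ u}

/-- Dominance order on fillings: `Z ≤_dom X` iff `δ⁽ᵘ⁾ ≤_dom γ⁽ᵘ⁾` for every `u`. -/
def DomLE {α β γ : Partn} (Z X : SkFilling α β γ) : Prop :=
  ∀ u j : ℕ, ∑ i ∈ Finset.range j, regionRow Z u i ≤ ∑ i ∈ Finset.range j, regionRow X u i

/-- A single sorting swap: exchange two out-of-order entries within a row
(left entry bigger) or within a column (upper entry bigger). -/
def SortSwap (β γ : Partn) (W Z : ℕ × ℕ → ℕ) : Prop :=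
  ∃ p q : ℕ × ℕ, p ∈ SkewCells β γ ∧ q ∈ SkewCells β γ ∧
    ((p.1 = q.1 ∧ p.2 < q.2) ∨ (p.2 = q.2 ∧ p.1 < q.1)) ∧
    W q < W p ∧
    Z = Function.update (Function.update W p (W q)) q (W p)

/-- `Z` is obtained from `X` by a decreasing box move: two entries of `X` are
exchanged so that the smaller entry is in the lower position after the exchange,
and then rows and columns are re-sorted if necessary. -/
def BoxMove {α β γ : Partn} (X Z : SkFilling α β γ) : Prop :=
  ∃ p q : ℕ × ℕ, p ∈ SkewCells β γ ∧ q ∈ SkewCells β γ ∧ p.1 < q.1 ∧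
    X.entry p < X.entry q ∧
    Relation.ReflTransGen (SortSwap β γ)
      (Function.update (Function.update X.entry p (X.entry q)) q (X.entry p)) Z.entry

/-- The box order on LR-fillings: generated by decreasing box moves. -/
def LeBox {α β γ : Partn} (Z X : SkFilling α β γ) : Prop :=
  Relation.ReflTransGen (fun Y W => IsLRF Y ∧ IsLRF W ∧ BoxMove W Y) Z X

/-! ### Reading words and standardization -/

/-- The block (paper entry, `1`-indexed) containing the `0`-indexed value `v`. -/
noncomputable def blockIdx (α : Partn) (v : ℕ) : ℕ := sInf {u | v < psum α u}

/-- `e` enumerates the boxes of the rook strip `β∖γ` from top right to bottom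
left, i.e. in increasing order of rows. -/
def IsRowRead (β γ : Partn) {n : ℕ} (e : Fin n → ℕ × ℕ) : Prop :=
  (∀ k, e k ∈ SkewCells β γ) ∧ Function.Injective e ∧
  (∀ c ∈ SkewCells β γ, ∃ k, e k = c) ∧
  ∀ k l : Fin n, k < l → (e k).1 < (e l).1

/-- `e` enumerates the boxes of `β∖γ` column by column from left to right, each
column read from bottom to top (the reading order of the word `ω`). -/
def IsColRead (β γ : Partn) {n : ℕ} (e : Fin n → ℕ × ℕ) : Prop :=
  (∀ k, e k ∈ SkewCells β γ) ∧ Function.Injective e ∧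
  (∀ c ∈ SkewCells β γ, ∃ k, e k = c) ∧
  ∀ k l : Fin n, k < l →
    (e k).2 < (e l).2 ∨ ((e k).2 = (e l).2 ∧ (e l).1 < (e k).1)

/-- `p` is the standardization `π(F)` of the reading word of the filling `F`
with respect to the reading enumeration `e`: position `k` receives a value in the
block corresponding to the entry of the `k`-th box, and equal entries receive
their values in reading order. -/
def IsStdOf (α : Partn) {β γ : Partn} {n : ℕ} (F : SkFilling α β γ)
    (e : Fin n → ℕ × ℕ) (p : Perm (Fin n)) : Prop :=
  (∀ k : Fin n, blockIdx α (p k) = F.entry (e k)) ∧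
  ∀ k l : Fin n, k < l → F.entry (e k) = F.entry (e l) → p k < p l

/-- The `α`-recording tableau of `x` is standard: the entries `x⁻¹(psum α u + j)`
increase along rows and down columns of the shape `α` (rows `0`-indexed). -/
def RecStd (α : Partn) {n : ℕ} (x : Perm (Fin n)) : Prop :=
  (∀ u j j' : ℕ, j < j' → j' < α.f u →
    ∀ (h : psum α u + j < n) (h' : psum α u + j' < n),
      x⁻¹ ⟨psum α u + j, h⟩ < x⁻¹ ⟨psum α u + j', h'⟩) ∧
  (∀ u u' j : ℕ, u < u' → j < α.f u' →
    ∀ (h : psum α u + j < n) (h' : psum α u' + j < n),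
      x⁻¹ ⟨psum α u + j, h⟩ < x⁻¹ ⟨psum α u' + j, h'⟩)

/-- Covering relation of the box order on LR-fillings. -/
def CovBox {α β γ : Partn} (X Y : SkFilling α β γ) : Prop :=
  IsLRF X ∧ IsLRF Y ∧ LeBox X Y ∧ X ≠ Y ∧
    ∀ W, IsLRF W → LeBox X W → LeBox W Y → W = X ∨ W = Y

/-- The decreasing block `(i, i-1, …, 1)`. -/
def descBlock (i : ℕ) : List ℕ := ((List.range i).reverse).map (· + 1)

/-!
Let `c = (i₀, j₀)` be the first box of the reading word where `Z` and `X` differ, let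
`u = X c`, and suppose `Z c > u`. The shapes `γ⁽ᵘ⁾` of `X` and `δ⁽ᵘ⁾` of `Z` have the same
size, since the content is fixed, and `δ⁽ᵘ⁾ ≤_dom γ⁽ᵘ⁾`; as conjugation reverses dominance,
`δ⁽ᵘ⁾` has at least as many boxes as `γ⁽ᵘ⁾` in its first `j₀ + 1` columns. But the fillings
agree on the boxes read before `c`, and by column strictness every box above `c` in its column
lies in `γ⁽ᵘ⁾`; so row by row `γ⁽ᵘ⁾` has at least as many boxes in those columns, and in row
`i₀` it has one more, namely `c`.
-/

open Finset

theorem SkFilling.ext {α β γ : Partn} {F G : SkFilling α β γ} (h : F.entry = G.entry) :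
    F = G := by
  cases F; cases G; subst h; rfl

theorem Antitone.exists_threshold {β : Type*} [LinearOrder β] {f : ℕ → β} (hf : Antitone f)
    (J : β) (N : ℕ) :
    ∃ m ≤ N, (∀ i < m, J < f i) ∧ ∀ i, m ≤ i → i < N → f i ≤ J := by
  classical
  have hex : ∃ m, N ≤ m ∨ f m ≤ J := ⟨N, .inl le_rfl⟩
  refine ⟨Nat.find hex, Nat.find_min' hex (.inl le_rfl), fun i hi => ?_, fun i hi hiN => ?_⟩
  · exact lt_of_not_ge (not_or.1 (Nat.find_min hex hi)).2
  · rcases Nat.find_spec hex with h | h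
    · omega
    · exact (hf hi).trans h

/-- `∑ i, min (g i) J` counts the boxes of `g` in its first `J` columns, so this says that
conjugation reverses dominance. -/
theorem sum_min_le_sum_min_of_dominated {f g : ℕ → ℕ} (hf : Antitone f) {N : ℕ}
    (hdom : ∀ m ≤ N, ∑ i ∈ range m, f i ≤ ∑ i ∈ range m, g i)
    (htot : ∑ i ∈ range N, f i = ∑ i ∈ range N, g i) (J : ℕ) :
    ∑ i ∈ range N, min (g i) J ≤ ∑ i ∈ range N, min (f i) J := by
  obtain ⟨m, hmN, hbig, hsmall⟩ := hf.exists_threshold J N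
  have hsplit (h : ℕ → ℕ) := sum_range_add_sum_Ico h hmN
  have hf_tail : ∑ i ∈ Ico m N, min (f i) J = ∑ i ∈ Ico m N, f i :=
    sum_congr rfl fun i hi => min_eq_left (hsmall i (mem_Ico.1 hi).1 (mem_Ico.1 hi).2)
  have hf_head : ∑ i ∈ range m, min (f i) J = ∑ _i ∈ range m, J :=
    sum_congr rfl fun i hi => min_eq_right (hbig i (mem_range.1 hi)).le
  have htail : ∑ i ∈ Ico m N, g i ≤ ∑ i ∈ Ico m N, f i := by
    have := hdom m hmN
    have := hsplit f
    have := hsplit g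
    omega
  calc ∑ i ∈ range N, min (g i) J
      = ∑ i ∈ range m, min (g i) J + ∑ i ∈ Ico m N, min (g i) J := (hsplit _).symm
    _ ≤ ∑ _i ∈ range m, J + ∑ i ∈ Ico m N, g i :=
        add_le_add (sum_le_sum fun i _ => min_le_right _ _)
          (sum_le_sum fun i _ => min_le_left _ _)
    _ ≤ ∑ _i ∈ range m, J + ∑ i ∈ Ico m N, f i := Nat.add_le_add_left htail _
    _ = ∑ i ∈ range N, min (f i) J := by rw [← hsplit, hf_head, hf_tail]

theorem Set.Finite.lt_ncard_iff_of_isLowerSet {s : Set ℕ} (hs : s.Finite) (hlow : IsLowerSet s)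
    (j : ℕ) : j < s.ncard ↔ j ∈ s := by
  rcases hlow.eq_univ_or_Iio with rfl | ⟨a, rfl⟩
  · exact absurd hs Set.infinite_univ
  · simp

theorem Set.ncard_eq_sum_ncard_preimage_mk {ι : Type*} {s : Set (ℕ × ι)} (hs : s.Finite)
    {N : ℕ} (hN : ∀ c ∈ s, c.1 < N) :
    s.ncard = ∑ i ∈ Finset.range N, (Prod.mk i ⁻¹' s).ncard := by
  classical
  lift s to Finset (ℕ × ι) using hs
  rw [Set.ncard_coe_finset, card_eq_sum_card_fiberwise (f := Prod.fst) (t := Finset.range N)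
    fun c hc => Finset.mem_range.2 (hN c hc)]
  refine sum_congr rfl fun i _ => ?_
  rw [← Set.ncard_coe_finset, ← Set.ncard_preimage_of_injective_subset_range
    (Prod.mk_right_injective i)]
  · congr 1
    ext j
    simp
  · rintro ⟨i', j⟩ hc
    simp only [coe_filter, Set.mem_ofPred_eq] at hc
    exact ⟨j, by rw [hc.2]⟩

theorem min_eq_min_of_forall_lt_iff {a b J : ℕ} (h : ∀ t < J, t < a ↔ t < b) :
    min a J = min b J := by
  by_contra hne
  rcases Nat.lt_or_gt_of_ne hne with hlt | hlt
  · have := h (min a J) (by omega)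
    omega
  · have := h (min b J) (by omega)
    omega

/-- `c` is read before `d` when reading columns left to right, each from bottom to top. -/
def ReadsBefore (c d : ℕ × ℕ) : Prop := c.2 < d.2 ∨ (c.2 = d.2 ∧ d.1 < c.1)

section Filling

variable {α β γ : Partn}

theorem regionRow_eq_ncard (F : SkFilling α β γ) (u i : ℕ) :
    regionRow F u i =
      {j | j < γ.f i ∨ ((i, j) ∈ SkewCells β γ ∧ F.entry (i, j) ≤ u)}.ncard := by
  have hdisj : Disjoint {j | j < γ.f i} {j | (i, j) ∈ SkewCells β γ ∧ F.entry (i, j) ≤ u} :=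
    Set.disjoint_left.2 fun j hγ hskew => absurd hskew.1.1 (not_le.2 hγ)
  have hfin : {j | (i, j) ∈ SkewCells β γ ∧ F.entry (i, j) ≤ u}.Finite :=
    (Set.finite_Iio (β.f i)).subset fun j hj => hj.1.2
  rw [Set.ofPred_or, Set.ncard_union_eq hdisj (Set.finite_Iio _) hfin]
  exact congrArg (· + _) (Set.ncard_Iio_nat (γ.f i)).symm

theorem IsLRF.lt_regionRow_iff {F : SkFilling α β γ} (hF : IsLRF F) (u i j : ℕ) :
    j < regionRow F u i ↔ j < γ.f i ∨ ((i, j) ∈ SkewCells β γ ∧ F.entry (i, j) ≤ u) := by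
  rw [regionRow_eq_ncard]
  refine Set.Finite.lt_ncard_iff_of_isLowerSet ?_ ?_ j
  · exact ((Set.finite_Iio (γ.f i)).union (Set.finite_Iio (β.f i))).subset fun j hj =>
      hj.imp id fun h => h.1.2
  · rintro b a hab (hb | ⟨hb, hbu⟩)
    · exact .inl (lt_of_le_of_lt hab hb)
    · refine (lt_or_ge a (γ.f i)).imp id fun ha => ⟨⟨ha, lt_of_le_of_lt hab hb.2⟩, ?_⟩
      exact (hF.1 i a b ⟨ha, lt_of_le_of_lt hab hb.2⟩ hb hab).trans hbu

theorem IsLRF.regionRow_antitone {F : SkFilling α β γ} (hF : IsLRF F) (u : ℕ) :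
    Antitone (regionRow F u) := by
  refine antitone_nat_of_succ_le fun i => le_of_forall_lt fun j hj => ?_
  rw [hF.lt_regionRow_iff] at hj ⊢
  rcases hj with hγ | ⟨hskew, hle⟩
  · exact .inl (lt_of_lt_of_le hγ (γ.antitone' i.le_succ))
  · refine (lt_or_ge j (γ.f i)).imp id fun hj => ?_
    have hcell : (i, j) ∈ SkewCells β γ := ⟨hj, lt_of_lt_of_le hskew.2 (β.antitone' i.le_succ)⟩
    exact ⟨hcell, (hF.2.1 i (i + 1) j hcell hskew i.lt_succ_self).le.trans hle⟩

theorem fst_lt_of_mem_skewCells {N : ℕ} (hN : ∀ i, N ≤ i → β.f i = 0) {c : ℕ × ℕ}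
    (hc : c ∈ SkewCells β γ) : c.1 < N := by
  by_contra h
  have := hN c.1 (not_lt.1 h)
  have := hc.2
  omega

theorem skewCells_finite (β γ : Partn) : (SkewCells β γ).Finite := by
  obtain ⟨N, hN⟩ := β.finite_supp
  refine ((Set.finite_Iio N).prod (Set.finite_Iio (β.f 0))).subset fun c hc => ?_
  exact ⟨fst_lt_of_mem_skewCells hN hc, lt_of_lt_of_le hc.2 (β.antitone' c.1.zero_le)⟩

theorem SkFilling.ncard_entry_le (F : SkFilling α β γ) (u : ℕ) :
    {c ∈ SkewCells β γ | F.entry c ≤ u}.ncard = ∑ v ∈ Icc 1 u, α.f (v - 1) := by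
  induction u with
  | zero =>
    have : {c ∈ SkewCells β γ | F.entry c ≤ 0} = ∅ :=
      Set.eq_empty_of_forall_notMem fun c hc => by
        have := F.pos_inside c hc.1
        have := hc.2
        omega
    rw [this, Set.ncard_empty, Icc_eq_empty_of_lt zero_lt_one, sum_empty]
  | succ u ih =>
    have hsplit : {c ∈ SkewCells β γ | F.entry c ≤ u + 1} =
        {c ∈ SkewCells β γ | F.entry c ≤ u} ∪ {c ∈ SkewCells β γ | F.entry c = u + 1} := by
      ext c
      simp only [Set.mem_ofPred_eq, Set.mem_union, Nat.le_succ_iff, and_or_left]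
    have hdisj : Disjoint {c ∈ SkewCells β γ | F.entry c ≤ u}
        {c ∈ SkewCells β γ | F.entry c = u + 1} :=
      Set.disjoint_left.2 fun c h1 h2 => by have := h1.2; have := h2.2; omega
    rw [hsplit, Set.ncard_union_eq hdisj ((skewCells_finite β γ).subset fun c hc => hc.1)
      ((skewCells_finite β γ).subset fun c hc => hc.1), ih, F.content (u + 1) (by omega),
      sum_Icc_succ_top (by omega)]

theorem SkFilling.sum_regionRow (F : SkFilling α β γ) (u : ℕ) {N : ℕ}
    (hN : ∀ i, N ≤ i → β.f i = 0) :
    ∑ i ∈ range N, regionRow F u i = ∑ i ∈ range N, γ.f i + ∑ v ∈ Icc 1 u, α.f (v - 1) := by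
  unfold regionRow
  rw [sum_add_distrib, ← F.ncard_entry_le u,
    Set.ncard_eq_sum_ncard_preimage_mk ((skewCells_finite β γ).subset fun c hc => hc.1)
      fun c hc => fst_lt_of_mem_skewCells hN hc.1]
  rfl

theorem IsColRead.lt_of_readsBefore {n : ℕ} {e : Fin n → ℕ × ℕ} (he : IsColRead β γ e)
    {k l : Fin n} (h : ReadsBefore (e l) (e k)) : l < k := by
  unfold ReadsBefore at h
  refine lt_of_not_ge fun hkl => ?_
  rcases hkl.lt_or_eq with hkl | rfl
  · have := he.2.2.2 k l hkl
    omega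
  · omega

theorem IsColRead.exists_entry_ne {n : ℕ} {e : Fin n → ℕ × ℕ} (he : IsColRead β γ e)
    {X Z : SkFilling α β γ} (hne : Z ≠ X) : ∃ l, Z.entry (e l) ≠ X.entry (e l) := by
  by_contra! h
  refine hne (SkFilling.ext (funext fun c => ?_))
  by_cases hc : c ∈ SkewCells β γ
  · obtain ⟨l, rfl⟩ := he.2.2.1 c hc
    exact h l
  · rw [Z.zero_outside c hc, X.zero_outside c hc]

section Comparison

variable {X Z : SkFilling α β γ} {c : ℕ × ℕ}

theorem sum_min_regionRow_lt (hX : IsLRF X) (hZ : IsLRF Z) (hc : c ∈ SkewCells β γ)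
    (hagree : ∀ d ∈ SkewCells β γ, ReadsBefore d c → Z.entry d = X.entry d)
    (hlt : X.entry c < Z.entry c) {N : ℕ} (hN : c.1 < N) :
    ∑ i ∈ range N, min (regionRow Z (X.entry c) i) (c.2 + 1)
      < ∑ i ∈ range N, min (regionRow X (X.entry c) i) (c.2 + 1) := by
  obtain ⟨i₀, j₀⟩ := c
  set u := X.entry (i₀, j₀)
  have hX_above : ∀ i ≤ i₀, j₀ < regionRow X u i := by
    intro i hi
    rw [hX.lt_regionRow_iff]
    refine (lt_or_ge j₀ (γ.f i)).imp id fun hj => ?_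
    have hcell : (i, j₀) ∈ SkewCells β γ := ⟨hj, lt_of_lt_of_le hc.2 (β.antitone' hi)⟩
    rcases hi.lt_or_eq with hi | rfl
    · exact ⟨hcell, (hX.2.1 i i₀ j₀ hcell hc hi).le⟩
    · exact ⟨hcell, le_rfl⟩
  have hZ_at : regionRow Z u i₀ ≤ j₀ := by
    refine not_lt.1 fun h => ?_
    rcases (hZ.lt_regionRow_iff u i₀ j₀).1 h with hγ | ⟨-, hle⟩
    · exact absurd hc.1 (not_le.2 hγ)
    · exact absurd hlt (not_lt.2 hle)
  have hbelow (i : ℕ) (hi : i₀ < i) :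
      min (regionRow Z u i) (j₀ + 1) = min (regionRow X u i) (j₀ + 1) := by
    refine min_eq_min_of_forall_lt_iff fun j hj => ?_
    rw [hX.lt_regionRow_iff, hZ.lt_regionRow_iff]
    refine or_congr_right (and_congr_right fun hcell => ?_)
    rw [hagree (i, j) hcell (by unfold ReadsBefore; omega)]
  refine sum_lt_sum (fun i _ => ?_) ⟨i₀, mem_range.2 hN, ?_⟩
  · rcases lt_trichotomy i i₀ with hi | rfl | hi
    · have := hX_above i hi.le
      omega
    · have := hX_above i le_rfl
      omega
    · exact (hbelow i hi).le
  · have := hX_above i₀ le_rfl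
    omega

theorem IsLRF.entry_le_of_domLE (hX : IsLRF X) (hZ : IsLRF Z) (hdom : DomLE Z X)
    (hc : c ∈ SkewCells β γ)
    (hagree : ∀ d ∈ SkewCells β γ, ReadsBefore d c → Z.entry d = X.entry d) :
    Z.entry c ≤ X.entry c := by
  by_contra! hlt
  obtain ⟨N, hN⟩ := β.finite_supp
  have htot : ∑ i ∈ range N, regionRow Z (X.entry c) i
      = ∑ i ∈ range N, regionRow X (X.entry c) i := by
    rw [Z.sum_regionRow _ hN, X.sum_regionRow _ hN]
  have hge := sum_min_le_sum_min_of_dominated (hZ.regionRow_antitone (X.entry c))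
    (fun m _ => hdom (X.entry c) m) htot (c.2 + 1)
  have hlt' := sum_min_regionRow_lt hX hZ hc hagree hlt (fst_lt_of_mem_skewCells hN hc)
  omega

end Comparison

end Filling

theorem stmt11_general (n : ℕ) (α β γ : Partn)
    (e : Fin n → ℕ × ℕ) (he : IsColRead β γ e)
    (X Z : SkFilling α β γ) (hX : IsLRF X) (hZ : IsLRF Z)
    (hdom : DomLE Z X ∧ Z ≠ X) :
    ∃ k : Fin n, (∀ j : Fin n, j < k → Z.entry (e j) = X.entry (e j)) ∧
      Z.entry (e k) < X.entry (e k) := by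
  obtain ⟨hle, hne⟩ := hdom
  obtain ⟨k, hk, hmin⟩ := wellFounded_lt.has_min {l | Z.entry (e l) ≠ X.entry (e l)}
    (he.exists_entry_ne hne)
  have hagree (j : Fin n) (hj : j < k) : Z.entry (e j) = X.entry (e j) :=
    not_not.1 fun h => hmin j h hj
  refine ⟨k, hagree, lt_of_le_of_ne (hX.entry_le_of_domLE hZ hle (he.1 k) ?_) hk⟩
  intro d hd hbefore
  obtain ⟨l, rfl⟩ := he.2.2.1 d hd
  exact hagree l (he.lt_of_readsBefore hbefore)

/-- `Z <_dom X` implies `ω(Z) < ω(X)` lexicographically, where the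
word `ω` reads columns left to right, each from bottom to top. -/
theorem stmt11 (n : ℕ) (α β γ : Partn) (hsub : PartnSub γ β)
    (e : Fin n → ℕ × ℕ) (he : IsColRead β γ e)
    (X Z : SkFilling α β γ) (hX : IsLRF X) (hZ : IsLRF Z)
    (hdom : DomLE Z X ∧ Z ≠ X) :
    ∃ k : Fin n, (∀ j : Fin n, j < k → Z.entry (e j) = X.entry (e j)) ∧
      Z.entry (e k) < X.entry (e k) :=
  stmt11_general n α β γ e he X Z hX hZ hdom
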